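/- arXiv:nlin/0408041 — 9 statements merged into one kernel-verified Lean document; each statement's English description precedes it below -/
import Mathlib

section
/- Let y : ℝ → ℝ be four times differentiable with y''''(x) − 10·y(x)·y''(x) − 5·y'(x)² + 10·y(x)³ = 0 for all x. Then the function x ↦ y'(x)·y'''(x) − (1/2)·y''(x)² − 5·y(x)·y'(x)² + (5/2)·y(x)⁴ is constant on ℝ. -/
/-! Differentiating the first integral along a solution gives `y' · (y'''' − 10 y y'' − 5 y'² + 10 y³)`,
which vanishes by the equation; a function with zero derivative on `ℝ` is constant. -/

/-- `uₖ` plays the role of the `k`-th derivative of `u`. -/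
noncomputable def firstIntegral (u u₁ u₂ u₃ : ℝ → ℝ) (t : ℝ) : ℝ :=
  u₁ t * u₃ t - (1/2) * (u₂ t) ^ 2 - 5 * u t * (u₁ t) ^ 2 + (5/2) * u t ^ 4

theorem hasDerivAt_firstIntegral {u u₁ u₂ u₃ : ℝ → ℝ} {u₄ x : ℝ}
    (h₀ : HasDerivAt u (u₁ x) x) (h₁ : HasDerivAt u₁ (u₂ x) x)
    (h₂ : HasDerivAt u₂ (u₃ x) x) (h₃ : HasDerivAt u₃ u₄ x) :
    HasDerivAt (firstIntegral u u₁ u₂ u₃)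
      (u₁ x * (u₄ - 10 * u x * u₂ x - 5 * u₁ x ^ 2 + 10 * u x ^ 3)) x := by
  have h : HasDerivAt (firstIntegral u u₁ u₂ u₃) _ x :=
    (((h₁.mul h₃).sub ((h₂.pow 2).const_mul (1/2 : ℝ))).sub
      ((h₀.const_mul 5).mul (h₁.pow 2))).add ((h₀.pow 4).const_mul (5/2 : ℝ))
  refine h.congr_deriv ?_
  simp only [Pi.pow_apply]
  push_cast
  ring

theorem stmt7 (y : ℝ → ℝ)
    (hd0 : Differentiable ℝ y) (hd1 : Differentiable ℝ (deriv y))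
    (hd2 : Differentiable ℝ (deriv (deriv y)))
    (hd3 : Differentiable ℝ (deriv (deriv (deriv y))))
    (hy : ∀ x : ℝ, deriv (deriv (deriv (deriv y))) x - 10 * y x * deriv (deriv y) x - 5 * (deriv y x) ^ 2 + 10 * y x ^ 3 = 0) :
    ∀ x₁ x₂ : ℝ, (deriv y x₁ * deriv (deriv (deriv y)) x₁ - (1/2) * (deriv (deriv y) x₁) ^ 2 - 5 * y x₁ * (deriv y x₁) ^ 2 + (5/2) * y x₁ ^ 4) = (deriv y x₂ * deriv (deriv (deriv y)) x₂ - (1/2) * (deriv (deriv y) x₂) ^ 2 - 5 * y x₂ * (deriv y x₂) ^ 2 + (5/2) * y x₂ ^ 4) := by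
  have hF : ∀ x, HasDerivAt (firstIntegral y (deriv y) (deriv (deriv y)) (deriv (deriv (deriv y)))) 0 x := by
    intro x
    have h := hasDerivAt_firstIntegral (hd0 x).hasDerivAt (hd1 x).hasDerivAt
      (hd2 x).hasDerivAt (hd3 x).hasDerivAt
    rwa [hy x, mul_zero] at h
  exact is_const_of_deriv_eq_zero (fun x ↦ (hF x).differentiableAt) (fun x ↦ (hF x).deriv)
end

section
/- Let β, δ, μ ∈ ℝ and let y : ℝ → ℝ be four times differentiable with y''''(x) − 10·y(x)·y''(x) − 5·y'(x)² + 10·y(x)³ + β·(y''(x) − 3·y(x)²) + δ·y(x) + μ = 0 for all x. Then the function x ↦ y'''(x)² − 12·y(x)·y'(x)·y'''(x) − 4·y(x)·y''(x)² + 2·y'(x)²·y''(x) + 20·y(x)³·y''(x) + 30·y(x)²·y'(x)² − 24·y(x)⁵ + β·(y''(x) − 3·y(x)²)² + δ·(2·y(x)·y''(x) − 4·y(x)³ − y'(x)²) + 2·μ·(y''(x) − 3·y(x)²) is constant on ℝ. -/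
/-!
Along a solution, the derivative of the first integral `I(y, y', y'', y''')` is `(2y''' - 12yy')`
times the left-hand side of the equation, so it vanishes identically and `I` is constant.
-/

-- The arguments `u, u₁, u₂, u₃, u₄` stand for the jet `y, y', y'', y''', y''''`.
def kdv5Residual (β δ μ u u₁ u₂ u₄ : ℝ) : ℝ :=
  u₄ - 10 * u * u₂ - 5 * u₁ ^ 2 + 10 * u ^ 3 + β * (u₂ - 3 * u ^ 2) + δ * u + μ

def kdv5Integral (β δ μ u u₁ u₂ u₃ : ℝ) : ℝ :=
  u₃ ^ 2 - 12 * u * u₁ * u₃ - 4 * u * u₂ ^ 2 + 2 * u₁ ^ 2 * u₂ + 20 * u ^ 3 * u₂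
    + 30 * u ^ 2 * u₁ ^ 2 - 24 * u ^ 5 + β * (u₂ - 3 * u ^ 2) ^ 2
    + δ * (2 * u * u₂ - 4 * u ^ 3 - u₁ ^ 2) + 2 * μ * (u₂ - 3 * u ^ 2)

theorem hasDerivAt_kdv5Integral (β δ μ : ℝ) {u u₁ u₂ u₃ : ℝ → ℝ} {x u₄ : ℝ}
    (h₀ : HasDerivAt u (u₁ x) x) (h₁ : HasDerivAt u₁ (u₂ x) x)
    (h₂ : HasDerivAt u₂ (u₃ x) x) (h₃ : HasDerivAt u₃ u₄ x) :
    HasDerivAt (fun x => kdv5Integral β δ μ (u x) (u₁ x) (u₂ x) (u₃ x))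
      ((2 * u₃ x - 12 * u x * u₁ x) * kdv5Residual β δ μ (u x) (u₁ x) (u₂ x) u₄) x := by
  have hW := h₂.sub ((h₀.pow 2).const_mul 3)
  have H := (((((((((h₃.pow 2).sub (((h₀.const_mul 12).mul h₁).mul h₃)).sub
    ((h₀.const_mul 4).mul (h₂.pow 2))).add
    (((h₁.pow 2).const_mul 2).mul h₂)).add
    (((h₀.pow 3).const_mul 20).mul h₂)).add
    (((h₀.pow 2).const_mul 30).mul (h₁.pow 2))).sub
    ((h₀.pow 5).const_mul 24)).add
    ((hW.pow 2).const_mul β)).add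
    (((((h₀.const_mul 2).mul h₂).sub ((h₀.pow 3).const_mul 4)).sub (h₁.pow 2)).const_mul δ)).add
    (hW.const_mul (2 * μ))
  refine H.congr_deriv ?_
  simp only [kdv5Residual, Pi.pow_apply, Pi.mul_apply, Pi.sub_apply]
  push_cast
  ring

theorem stmt9 (β δ μ : ℝ) (y : ℝ → ℝ)
    (hd0 : Differentiable ℝ y) (hd1 : Differentiable ℝ (deriv y))
    (hd2 : Differentiable ℝ (deriv (deriv y)))
    (hd3 : Differentiable ℝ (deriv (deriv (deriv y))))
    (hy : ∀ x : ℝ, deriv (deriv (deriv (deriv y))) x - 10 * y x * deriv (deriv y) x - 5 * (deriv y x) ^ 2 + 10 * y x ^ 3 + β * (deriv (deriv y) x - 3 * y x ^ 2) + δ * y x + μ = 0) :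
    ∀ x₁ x₂ : ℝ, ((deriv (deriv (deriv y)) x₁) ^ 2 - 12 * y x₁ * deriv y x₁ * deriv (deriv (deriv y)) x₁ - 4 * y x₁ * (deriv (deriv y) x₁) ^ 2 + 2 * (deriv y x₁) ^ 2 * deriv (deriv y) x₁ + 20 * y x₁ ^ 3 * deriv (deriv y) x₁ + 30 * y x₁ ^ 2 * (deriv y x₁) ^ 2 - 24 * y x₁ ^ 5 + β * (deriv (deriv y) x₁ - 3 * y x₁ ^ 2) ^ 2 + δ * (2 * y x₁ * deriv (deriv y) x₁ - 4 * y x₁ ^ 3 - (deriv y x₁) ^ 2) + 2 * μ * (deriv (deriv y) x₁ - 3 * y x₁ ^ 2)) = ((deriv (deriv (deriv y)) x₂) ^ 2 - 12 * y x₂ * deriv y x₂ * deriv (deriv (deriv y)) x₂ - 4 * y x₂ * (deriv (deriv y) x₂) ^ 2 + 2 * (deriv y x₂) ^ 2 * deriv (deriv y) x₂ + 20 * y x₂ ^ 3 * deriv (deriv y) x₂ + 30 * y x₂ ^ 2 * (deriv y x₂) ^ 2 - 24 * y x₂ ^ 5 + β * (deriv (deriv y) x₂ - 3 * y x₂ ^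 2) ^ 2 + δ * (2 * y x₂ * deriv (deriv y) x₂ - 4 * y x₂ ^ 3 - (deriv y x₂) ^ 2) + 2 * μ * (deriv (deriv y) x₂ - 3 * y x₂ ^ 2)) := by
  have hI : ∀ x, HasDerivAt (fun x => kdv5Integral β δ μ (y x) (deriv y x)
      (deriv (deriv y) x) (deriv (deriv (deriv y)) x)) 0 x := fun x => by
    simpa only [kdv5Residual, hy x, mul_zero] using hasDerivAt_kdv5Integral β δ μ
      (hd0 x).hasDerivAt (hd1 x).hasDerivAt (hd2 x).hasDerivAt (hd3 x).hasDerivAt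
  exact is_const_of_deriv_eq_zero (fun x => (hI x).differentiableAt) (fun x => (hI x).deriv)
end

section
/- Let β, δ, μ ∈ ℝ and let y : ℝ → ℝ be four times differentiable with y''''(x) − 10·y(x)²·y''(x) − 10·y(x)·y'(x)² + 6·y(x)⁵ + β·(y''(x) − 2·y(x)³) + δ·y(x) + μ = 0 for all x. Then the function x ↦ y'(x)·y'''(x) − (1/2)·y''(x)² − 5·y(x)²·y'(x)² + y(x)⁶ + (1/2)·β·(y'(x)² − y(x)⁴) + (1/2)·δ·y(x)² + μ·y(x) is constant on ℝ. -/
/-! The expression is a first integral: its derivative is `y'` times the left-hand side of the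
equation, so it has zero derivative along every solution. -/

namespace FifthOrderMKdV

/-- The first integral, evaluated on the jet `(y, y', y'', y''')`. -/
noncomputable def firstIntegral (β δ μ y₀ y₁ y₂ y₃ : ℝ) : ℝ :=
  y₁ * y₃ - (1/2) * y₂ ^ 2 - 5 * y₀ ^ 2 * y₁ ^ 2 + y₀ ^ 6 + (1/2) * β * (y₁ ^ 2 - y₀ ^ 4)
    + (1/2) * δ * y₀ ^ 2 + μ * y₀

/-- The left-hand side of the equation, evaluated on the jet `(y, y', y'', y'''')`. -/
def residual (β δ μ y₀ y₁ y₂ y₄ : ℝ) : ℝ :=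
  y₄ - 10 * y₀ ^ 2 * y₂ - 10 * y₀ * y₁ ^ 2 + 6 * y₀ ^ 5 + β * (y₂ - 2 * y₀ ^ 3) + δ * y₀ + μ

theorem hasDerivAt_firstIntegral (β δ μ : ℝ) {u₀ u₁ u₂ u₃ : ℝ → ℝ} {u₄ x : ℝ}
    (h₀ : HasDerivAt u₀ (u₁ x) x) (h₁ : HasDerivAt u₁ (u₂ x) x)
    (h₂ : HasDerivAt u₂ (u₃ x) x) (h₃ : HasDerivAt u₃ u₄ x) :
    HasDerivAt (fun t => FifthOrderMKdV.firstIntegral β δ μ (u₀ t) (u₁ t) (u₂ t) (u₃ t))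
      (u₁ x * residual β δ μ (u₀ x) (u₁ x) (u₂ x) u₄) x := by
  have h := ((((((h₁.mul h₃).sub ((h₂.pow 2).const_mul (1/2 : ℝ))).sub
      (((h₀.pow 2).const_mul (5 : ℝ)).mul (h₁.pow 2))).add (h₀.pow 6)).add
      (((h₁.pow 2).sub (h₀.pow 4)).const_mul ((1/2) * β))).add
      ((h₀.pow 2).const_mul ((1/2) * δ))).add (h₀.const_mul μ)
  refine h.congr_deriv ?_
  simp only [residual, Pi.pow_apply]
  ring

end FifthOrderMKdV

theorem stmt10 (β δ μ : ℝ) (y : ℝ → ℝ)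
    (hd0 : Differentiable ℝ y) (hd1 : Differentiable ℝ (deriv y))
    (hd2 : Differentiable ℝ (deriv (deriv y)))
    (hd3 : Differentiable ℝ (deriv (deriv (deriv y))))
    (hy : ∀ x : ℝ, deriv (deriv (deriv (deriv y))) x - 10 * y x ^ 2 * deriv (deriv y) x - 10 * y x * (deriv y x) ^ 2 + 6 * y x ^ 5 + β * (deriv (deriv y) x - 2 * y x ^ 3) + δ * y x + μ = 0) :
    ∀ x₁ x₂ : ℝ, (deriv y x₁ * deriv (deriv (deriv y)) x₁ - (1/2) * (deriv (deriv y) x₁) ^ 2 - 5 * y x₁ ^ 2 * (deriv y x₁) ^ 2 + y x₁ ^ 6 + (1/2) * β * ((deriv y x₁) ^ 2 - y x₁ ^ 4) + (1/2) * δ * y x₁ ^ 2 + μ * y x₁) = (deriv y x₂ * deriv (deriv (deriv y)) x₂ - (1/2) * (deriv (deriv y) x₂) ^ 2 - 5 * y x₂ ^ 2 * (deriv y x₂) ^ 2 + y x₂ ^ 6 + (1/2) * β * ((deriv y x₂) ^ 2 - y x₂ ^ 4) + (1/2) * δ * y x₂ ^ 2 + μ * y x₂) := by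
  have hF : ∀ x, HasDerivAt (fun t => FifthOrderMKdV.firstIntegral β δ μ (y t) (deriv y t)
      (deriv (deriv y) t) (deriv (deriv (deriv y)) t)) 0 x := by
    intro x
    have h := FifthOrderMKdV.hasDerivAt_firstIntegral β δ μ (hd0 x).hasDerivAt (hd1 x).hasDerivAt
      (hd2 x).hasDerivAt (hd3 x).hasDerivAt
    rwa [show FifthOrderMKdV.residual β δ μ _ _ _ _ = 0 from hy x, mul_zero] at h
  exact is_const_of_deriv_eq_zero (fun x => (hF x).differentiableAt) (fun x => (hF x).deriv)
end

section
/- Let β, δ, μ ∈ ℝ and let y : ℝ → ℝ be four times differentiable with y''''(x) − 10·y(x)²·y''(x) − 10·y(x)·y'(x)² + 6·y(x)⁵ + β·(y''(x) − 2·y(x)³) + δ·y(x) + μ = 0 for all x. Then the function x ↦ y'''(x)² − 12·y(x)²·y'(x)·y'''(x) − 4·y(x)²·y''(x)² + 4·y(x)·y'(x)²·y''(x) + 12·y(x)⁵·y''(x) − y'(x)⁴ + 30·y(x)⁴·y'(x)² − 9·y(x)⁸ + β·(y''(x) − 2·y(x)³)² + δ·(2·y(x)·y''(x) − y'(x)²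 − 3·y(x)⁴) + 2·μ·(y''(x) − 2·y(x)³) is constant on ℝ. -/
/-!
Along a solution, the derivative of the first integral `I(y, y', y'', y''')` is the left-hand side
of the travelling-wave equation times the integrating factor `2 y''' - 12 y² y'`; so it vanishes, and
`I` is constant by the mean value theorem.
-/

namespace MKdV5

def firstIntegral (β δ μ y y₁ y₂ y₃ : ℝ) : ℝ :=
  y₃ ^ 2 - 12 * y ^ 2 * y₁ * y₃ - 4 * y ^ 2 * y₂ ^ 2 + 4 * y * y₁ ^ 2 * y₂ + 12 * y ^ 5 * y₂
    - y₁ ^ 4 + 30 * y ^ 4 * y₁ ^ 2 - 9 * y ^ 8 + β * (y₂ - 2 * y ^ 3) ^ 2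
    + δ * (2 * y * y₂ - y₁ ^ 2 - 3 * y ^ 4) + 2 * μ * (y₂ - 2 * y ^ 3)

def odeLHS (β δ μ y y₁ y₂ y₄ : ℝ) : ℝ :=
  y₄ - 10 * y ^ 2 * y₂ - 10 * y * y₁ ^ 2 + 6 * y ^ 5 + β * (y₂ - 2 * y ^ 3) + δ * y + μ

theorem hasDerivAt_firstIntegral (β δ μ : ℝ) {y y₁ y₂ y₃ : ℝ → ℝ} {y₄ x : ℝ}
    (h₀ : HasDerivAt y (y₁ x) x) (h₁ : HasDerivAt y₁ (y₂ x) x)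
    (h₂ : HasDerivAt y₂ (y₃ x) x) (h₃ : HasDerivAt y₃ y₄ x) :
    HasDerivAt (fun t => firstIntegral β δ μ (y t) (y₁ t) (y₂ t) (y₃ t))
      ((2 * y₃ x - 12 * y x ^ 2 * y₁ x) * odeLHS β δ μ (y x) (y₁ x) (y₂ x) y₄) x := by
  have H := (((((((((((h₃.pow 2).sub ((((h₀.pow 2).const_mul 12).mul h₁).mul h₃)).sub
      (((h₀.pow 2).const_mul 4).mul (h₂.pow 2))).add
      (((h₀.const_mul 4).mul (h₁.pow 2)).mul h₂)).add
      (((h₀.pow 5).const_mul 12).mul h₂)).sub (h₁.pow 4)).add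
      (((h₀.pow 4).const_mul 30).mul (h₁.pow 2))).sub ((h₀.pow 8).const_mul 9)).add
      (((h₂.sub ((h₀.pow 3).const_mul 2)).pow 2).const_mul β)).add
      (((((h₀.const_mul 2).mul h₂).sub (h₁.pow 2)).sub ((h₀.pow 4).const_mul 3)).const_mul δ)).add
      ((h₂.sub ((h₀.pow 3).const_mul 2)).const_mul (2 * μ)))
  refine H.congr_deriv ?_
  simp only [odeLHS, Pi.pow_apply, Pi.mul_apply, Pi.sub_apply]
  ring

end MKdV5

open MKdV5 in
theorem stmt11 (β δ μ : ℝ) (y : ℝ → ℝ)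
    (hd0 : Differentiable ℝ y) (hd1 : Differentiable ℝ (deriv y))
    (hd2 : Differentiable ℝ (deriv (deriv y)))
    (hd3 : Differentiable ℝ (deriv (deriv (deriv y))))
    (hy : ∀ x : ℝ, deriv (deriv (deriv (deriv y))) x - 10 * y x ^ 2 * deriv (deriv y) x - 10 * y x * (deriv y x) ^ 2 + 6 * y x ^ 5 + β * (deriv (deriv y) x - 2 * y x ^ 3) + δ * y x + μ = 0) :
    ∀ x₁ x₂ : ℝ, ((deriv (deriv (deriv y)) x₁) ^ 2 - 12 * y x₁ ^ 2 * deriv y x₁ * deriv (deriv (deriv y)) x₁ - 4 * y x₁ ^ 2 * (deriv (deriv y) x₁) ^ 2 + 4 * y x₁ * (deriv y x₁) ^ 2 * deriv (deriv y) x₁ + 12 * y x₁ ^ 5 * deriv (deriv y) x₁ - (deriv y x₁) ^ 4 + 30 * y x₁ ^ 4 * (deriv y x₁) ^ 2 - 9 * y x₁ ^ 8 + β * (deriv (deriv y) x₁ - 2 * y x₁ ^ 3) ^ 2 + δ * (2 * y x₁ * deriv (deriv y) x₁ - (deriv y x₁) ^ 2 - 3 * y x₁ ^ 4) + 2 * μ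 * (deriv (deriv y) x₁ - 2 * y x₁ ^ 3)) = ((deriv (deriv (deriv y)) x₂) ^ 2 - 12 * y x₂ ^ 2 * deriv y x₂ * deriv (deriv (deriv y)) x₂ - 4 * y x₂ ^ 2 * (deriv (deriv y) x₂) ^ 2 + 4 * y x₂ * (deriv y x₂) ^ 2 * deriv (deriv y) x₂ + 12 * y x₂ ^ 5 * deriv (deriv y) x₂ - (deriv y x₂) ^ 4 + 30 * y x₂ ^ 4 * (deriv y x₂) ^ 2 - 9 * y x₂ ^ 8 + β * (deriv (deriv y) x₂ - 2 * y x₂ ^ 3) ^ 2 + δ * (2 * y x₂ * deriv (deriv y) x₂ - (deriv y x₂) ^ 2 - 3 * y x₂ ^ 4) + 2 * μ * (deriv (deriv y) x₂ - 2 * y x₂ ^ 3)) := by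
  have hI : ∀ x, HasDerivAt (fun t => firstIntegral β δ μ (y t) (deriv y t)
      (deriv (deriv y) t) (deriv (deriv (deriv y)) t)) 0 x := by
    intro x
    have h := hasDerivAt_firstIntegral β δ μ (hd0 x).hasDerivAt (hd1 x).hasDerivAt
      (hd2 x).hasDerivAt (hd3 x).hasDerivAt
    rwa [odeLHS, hy x, mul_zero] at h
  exact is_const_of_deriv_eq_zero (fun x => (hI x).differentiableAt) (fun x => (hI x).deriv)
end

section
/- Let y : ℝ → ℝ be four times differentiable with y''''(x) − 10·y(x)²·y''(x) − 10·y(x)·y'(x)² + 6·y(x)⁵ = 0 for all x. Then the function x ↦ y'''(x)² − 12·y'''(x)·y'(x)·y(x)² − 4·y''(x)²·y(x)² + 4·y''(x)·y'(x)²·y(x) + 12·y''(x)·y(x)⁵ − y'(x)⁴ + 30·y'(x)²·y(x)⁴ − 9·y(x)⁸ is constant on ℝ. -/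
/-!
Differentiating the polynomial `mkdvFirstIntegral` along the 3-jet of any function gives
`(2 y''' - 12 y² y')` times the left-hand side of the equation, so it is constant on solutions.
-/

/-- The first integral as a polynomial in `(y, y', y'', y''')`. -/
def mkdvFirstIntegral (y₀ y₁ y₂ y₃ : ℝ) : ℝ :=
  y₃ ^ 2 - 12 * y₀ ^ 2 * y₁ * y₃ - 4 * y₀ ^ 2 * y₂ ^ 2 + 4 * y₀ * y₁ ^ 2 * y₂
    + 12 * y₀ ^ 5 * y₂ - y₁ ^ 4 + 30 * y₀ ^ 4 * y₁ ^ 2 - 9 * y₀ ^ 8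

theorem hasDerivAt_mkdvFirstIntegral {u₀ u₁ u₂ u₃ : ℝ → ℝ} {v₄ x : ℝ}
    (h₀ : HasDerivAt u₀ (u₁ x) x) (h₁ : HasDerivAt u₁ (u₂ x) x)
    (h₂ : HasDerivAt u₂ (u₃ x) x) (h₃ : HasDerivAt u₃ v₄ x) :
    HasDerivAt (fun t => mkdvFirstIntegral (u₀ t) (u₁ t) (u₂ t) (u₃ t))
      ((2 * u₃ x - 12 * u₀ x ^ 2 * u₁ x) *
        (v₄ - 10 * u₀ x ^ 2 * u₂ x - 10 * u₀ x * u₁ x ^ 2 + 6 * u₀ x ^ 5)) x := by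
  have H := (((((((h₃.pow 2).sub ((((h₀.pow 2).const_mul 12).mul h₁).mul h₃)).sub
    (((h₀.pow 2).const_mul 4).mul (h₂.pow 2))).add (((h₀.const_mul 4).mul (h₁.pow 2)).mul h₂)).add
    (((h₀.pow 5).const_mul 12).mul h₂)).sub (h₁.pow 4)).add
    (((h₀.pow 4).const_mul 30).mul (h₁.pow 2))).sub ((h₀.pow 8).const_mul 9)
  refine H.congr_deriv ?_
  simp only [Pi.pow_apply, Pi.mul_apply, Nat.cast_ofNat]
  ring

theorem stmt12 (y : ℝ → ℝ)
    (hd0 : Differentiable ℝ y) (hd1 : Differentiable ℝ (deriv y))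
    (hd2 : Differentiable ℝ (deriv (deriv y)))
    (hd3 : Differentiable ℝ (deriv (deriv (deriv y))))
    (hy : ∀ x : ℝ, deriv (deriv (deriv (deriv y))) x - 10 * y x ^ 2 * deriv (deriv y) x - 10 * y x * (deriv y x) ^ 2 + 6 * y x ^ 5 = 0) :
    ∀ x₁ x₂ : ℝ, ((deriv (deriv (deriv y)) x₁) ^ 2 - 12 * y x₁ ^ 2 * deriv y x₁ * deriv (deriv (deriv y)) x₁ - 4 * y x₁ ^ 2 * (deriv (deriv y) x₁) ^ 2 + 4 * y x₁ * (deriv y x₁) ^ 2 * deriv (deriv y) x₁ + 12 * y x₁ ^ 5 * deriv (deriv y) x₁ - (deriv y x₁) ^ 4 + 30 * y x₁ ^ 4 * (deriv y x₁) ^ 2 - 9 * y x₁ ^ 8) = ((deriv (deriv (deriv y)) x₂) ^ 2 - 12 * y x₂ ^ 2 * deriv y x₂ * deriv (deriv (deriv y)) x₂ - 4 * y x₂ ^ 2 * (deriv (deriv y) x₂) ^ 2 + 4 * y x₂ * (deriv y x₂) ^ 2 * deriv (deriv y) x₂ + 12 * y x₂ ^ 5 * deriv (deriv y) x₂ - (deriv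 y x₂) ^ 4 + 30 * y x₂ ^ 4 * (deriv y x₂) ^ 2 - 9 * y x₂ ^ 8) := by
  have hI : ∀ x, HasDerivAt
      (fun t => mkdvFirstIntegral (y t) (deriv y t) (deriv (deriv y) t) (deriv (deriv (deriv y)) t))
      0 x := fun x => by
    simpa [hy x] using hasDerivAt_mkdvFirstIntegral (hd0 x).hasDerivAt (hd1 x).hasDerivAt
      (hd2 x).hasDerivAt (hd3 x).hasDerivAt
  exact is_const_of_deriv_eq_zero (fun x => (hI x).differentiableAt) (fun x => (hI x).deriv)
end

section
/- Let δ ∈ ℝ and let y : ℝ → ℝ be four times differentiable with y''''(x) + 5·y'(x)·y''(x) − 5·y(x)²·y''(x) − 5·y(x)·y'(x)² + y(x)⁵ − δ = 0 for all x. Then the function x ↦ y'(x)·y'''(x) − (1/2)·y''(x)² − (5/2)·y(x)²·y'(x)² + (1/6)·y(x)⁶ + (5/3)·y'(x)³ − δ·y(x) is constant on ℝ. -/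
/-! Multiplying the equation by `y'` turns it into an exact derivative: along any solution,
`d/dx E(y, y', y'', y''') = y' · (y'''' + 5y'y'' − 5y²y'' − 5yy'² + y⁵ − δ) = 0`,
where `E` is the first integral below. -/

def fordyGibbonsResidual (δ y₀ y₁ y₂ y₄ : ℝ) : ℝ :=
  y₄ + 5 * y₁ * y₂ - 5 * y₀ ^ 2 * y₂ - 5 * y₀ * y₁ ^ 2 + y₀ ^ 5 - δ

noncomputable def fordyGibbonsIntegral (δ y₀ y₁ y₂ y₃ : ℝ) : ℝ :=
  y₁ * y₃ - (1/2) * y₂ ^ 2 - (5/2) * y₀ ^ 2 * y₁ ^ 2 + (1/6) * y₀ ^ 6 + (5/3) * y₁ ^ 3 - δ * y₀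

theorem hasDerivAt_fordyGibbonsIntegral (δ : ℝ) {y₀ y₁ y₂ y₃ : ℝ → ℝ} {y₄ x : ℝ}
    (h₀ : HasDerivAt y₀ (y₁ x) x) (h₁ : HasDerivAt y₁ (y₂ x) x)
    (h₂ : HasDerivAt y₂ (y₃ x) x) (h₃ : HasDerivAt y₃ y₄ x) :
    HasDerivAt (fun t => fordyGibbonsIntegral δ (y₀ t) (y₁ t) (y₂ t) (y₃ t))
      (y₁ x * fordyGibbonsResidual δ (y₀ x) (y₁ x) (y₂ x) y₄) x := by
  have h := (((((h₁.fun_mul h₃).fun_sub ((h₂.fun_pow 2).const_mul (1/2 : ℝ))).fun_sub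
    (((h₀.fun_pow 2).const_mul (5/2 : ℝ)).fun_mul (h₁.fun_pow 2))).fun_add
    ((h₀.fun_pow 6).const_mul (1/6 : ℝ))).fun_add ((h₁.fun_pow 3).const_mul (5/3 : ℝ))).fun_sub
    (h₀.const_mul δ)
  refine h.congr_deriv ?_
  rw [fordyGibbonsResidual]
  push_cast
  ring

theorem stmt13 (δ : ℝ) (y : ℝ → ℝ)
    (hd0 : Differentiable ℝ y) (hd1 : Differentiable ℝ (deriv y))
    (hd2 : Differentiable ℝ (deriv (deriv y)))
    (hd3 : Differentiable ℝ (deriv (deriv (deriv y))))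
    (hy : ∀ x : ℝ, deriv (deriv (deriv (deriv y))) x + 5 * deriv y x * deriv (deriv y) x - 5 * y x ^ 2 * deriv (deriv y) x - 5 * y x * (deriv y x) ^ 2 + y x ^ 5 - δ = 0) :
    ∀ x₁ x₂ : ℝ, (deriv y x₁ * deriv (deriv (deriv y)) x₁ - (1/2) * (deriv (deriv y) x₁) ^ 2 - (5/2) * y x₁ ^ 2 * (deriv y x₁) ^ 2 + (1/6) * y x₁ ^ 6 + (5/3) * (deriv y x₁) ^ 3 - δ * y x₁) = (deriv y x₂ * deriv (deriv (deriv y)) x₂ - (1/2) * (deriv (deriv y) x₂) ^ 2 - (5/2) * y x₂ ^ 2 * (deriv y x₂) ^ 2 + (1/6) * y x₂ ^ 6 + (5/3) * (deriv y x₂) ^ 3 - δ * y x₂) := by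
  have hE : ∀ x, HasDerivAt (fun t => fordyGibbonsIntegral δ (y t) (deriv y t)
      (deriv (deriv y) t) (deriv (deriv (deriv y)) t)) 0 x := by
    intro x
    have h := hasDerivAt_fordyGibbonsIntegral δ (hd0 x).hasDerivAt (hd1 x).hasDerivAt
      (hd2 x).hasDerivAt (hd3 x).hasDerivAt
    rwa [fordyGibbonsResidual, hy x, mul_zero] at h
  exact is_const_of_deriv_eq_zero (fun x => (hE x).differentiableAt) (fun x => (hE x).deriv)
end

section
/- Let y : ℝ → ℝ be four times differentiable with y(x) ≠ 0 for all x, and suppose y''''(x) − 4·y'(x)·y'''(x)/y(x) + (21/2)·y'(x)²·y''(x)/y(x)² − 3·y''(x)²/y(x) − (9/2)·y'(x)⁴/y(x)³ = 0 for all x. Then the function x ↦ y'(x)·y'''(x)/y(x)² − (1/2)·y''(x)²/y(x)² − 2·y'(x)²·y''(x)/y(x)³ + (9/8)·y'(x)⁴/y(x)⁴ is constant on ℝ. -/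
/-!
Writing `I` for the first integral and `E` for the left-hand side of the equation, the quotient
rule gives the identity `I' = (y' / y²) · E` (the factor is forced by the `y''''` term, which
only `y' y''' / y²` produces). So `I' = 0` along solutions and `I` is constant on `ℝ`.
-/

noncomputable section

def fourthOrderResidual (y : ℝ → ℝ) (x : ℝ) : ℝ :=
  deriv (deriv (deriv (deriv y))) x - 4 * deriv y x * deriv (deriv (deriv y)) x / y x +
    (21/2) * (deriv y x) ^ 2 * deriv (deriv y) x / y x ^ 2 - 3 * (deriv (deriv y) x) ^ 2 / y x -
    (9/2) * (deriv y x) ^ 4 / y x ^ 3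

def fourthOrderFirstIntegral (y : ℝ → ℝ) (x : ℝ) : ℝ :=
  deriv y x * deriv (deriv (deriv y)) x / y x ^ 2 - (1/2) * (deriv (deriv y) x) ^ 2 / y x ^ 2 -
    2 * (deriv y x) ^ 2 * deriv (deriv y) x / y x ^ 3 + (9/8) * (deriv y x) ^ 4 / y x ^ 4

end

theorem hasDerivAt_fourthOrderFirstIntegral {y : ℝ → ℝ} {x : ℝ} (hx : y x ≠ 0)
    (hd0 : DifferentiableAt ℝ y x) (hd1 : DifferentiableAt ℝ (deriv y) x)
    (hd2 : DifferentiableAt ℝ (deriv (deriv y)) x)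
    (hd3 : DifferentiableAt ℝ (deriv (deriv (deriv y))) x) :
    HasDerivAt (fourthOrderFirstIntegral y)
      (deriv y x / y x ^ 2 * fourthOrderResidual y x) x := by
  have h0 := hd0.hasDerivAt
  have h1 := hd1.hasDerivAt
  have h2 := hd2.hasDerivAt
  have h3 := hd3.hasDerivAt
  have quotient_rule :=
    ((((h1.mul h3).div (h0.pow 2) (pow_ne_zero 2 hx)).sub
      (((h2.pow 2).const_mul ((1 : ℝ) / 2)).div (h0.pow 2) (pow_ne_zero 2 hx))).sub
      ((((h1.pow 2).const_mul (2 : ℝ)).mul h2).div (h0.pow 3) (pow_ne_zero 3 hx))).add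
      (((h1.pow 4).const_mul ((9 : ℝ) / 8)).div (h0.pow 4) (pow_ne_zero 4 hx))
  refine quotient_rule.congr_deriv ?_
  simp only [fourthOrderResidual, Pi.pow_apply, Pi.mul_apply]
  field_simp
  ring

theorem stmt15 (y : ℝ → ℝ)
    (hne : ∀ x : ℝ, y x ≠ 0)
    (hd0 : Differentiable ℝ y) (hd1 : Differentiable ℝ (deriv y))
    (hd2 : Differentiable ℝ (deriv (deriv y)))
    (hd3 : Differentiable ℝ (deriv (deriv (deriv y))))
    (hy : ∀ x : ℝ, deriv (deriv (deriv (deriv y))) x - 4 * deriv y x * deriv (deriv (deriv y)) x / y x + (21/2) * (deriv y x) ^ 2 * deriv (deriv y) x / y x ^ 2 - 3 * (deriv (deriv y) x) ^ 2 / y x - (9/2) * (deriv y x) ^ 4 / y x ^ 3 = 0) :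
    ∀ x₁ x₂ : ℝ, (deriv y x₁ * deriv (deriv (deriv y)) x₁ / y x₁ ^ 2 - (1/2) * (deriv (deriv y) x₁) ^ 2 / y x₁ ^ 2 - 2 * (deriv y x₁) ^ 2 * deriv (deriv y) x₁ / y x₁ ^ 3 + (9/8) * (deriv y x₁) ^ 4 / y x₁ ^ 4) = (deriv y x₂ * deriv (deriv (deriv y)) x₂ / y x₂ ^ 2 - (1/2) * (deriv (deriv y) x₂) ^ 2 / y x₂ ^ 2 - 2 * (deriv y x₂) ^ 2 * deriv (deriv y) x₂ / y x₂ ^ 3 + (9/8) * (deriv y x₂) ^ 4 / y x₂ ^ 4) := by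
  have hderiv (x : ℝ) : HasDerivAt (fourthOrderFirstIntegral y) 0 x := by
    have h := hasDerivAt_fourthOrderFirstIntegral (hne x) (hd0 x) (hd1 x) (hd2 x) (hd3 x)
    rwa [fourthOrderResidual, hy x, mul_zero] at h
  exact is_const_of_deriv_eq_zero (fun x => (hderiv x).differentiableAt)
    (fun x => (hderiv x).deriv)
end

section
/- Let ν, δ, μ ∈ ℝ and let y : ℝ → ℝ be four times differentiable with y(x) ≠ 0 for all x, satisfying y''''(x) − 4·y'(x)·y'''(x)/y(x) + (21/2)·y'(x)²·y''(x)/y(x)² − 3·y''(x)²/y(x) − 5·δ·y''(x)/y(x)² − (9/2)·y'(x)⁴/y(x)³ + 10·δ·y'(x)²/y(x)³ + ν·y(x)² − 2·δ²/y(x)³ + μ = 0 for all x. Then the function x ↦ y'(x)·y'''(x)/y(x)² − (1/2)·y''(x)²/y(x)² − 2·y'(x)²·y''(x)/y(x)³ + (9/8)·y'(x)⁴/y(x)⁴ − (5/2)·δ·y'(x)²/y(x)⁴ + (1/2)·δ²/y(x)⁴ − μ/y(x) + ν·y(x) is constant on ℝ. -/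
/-! The first integral `I` satisfies `I' = (y' / y²) · R`, where `R` is the left-hand side of the
equation; so `I' = 0` along solutions and `I` is constant. -/

noncomputable section

namespace HigherPainleve

def equationLHS (ν δ μ : ℝ) (y : ℝ → ℝ) (x : ℝ) : ℝ :=
  deriv (deriv (deriv (deriv y))) x - 4 * deriv y x * deriv (deriv (deriv y)) x / y x
    + (21/2) * (deriv y x) ^ 2 * deriv (deriv y) x / y x ^ 2 - 3 * (deriv (deriv y) x) ^ 2 / y x
    - 5 * δ * deriv (deriv y) x / y x ^ 2 - (9/2) * (deriv y x) ^ 4 / y x ^ 3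
    + 10 * δ * (deriv y x) ^ 2 / y x ^ 3 + ν * y x ^ 2 - 2 * δ ^ 2 / y x ^ 3 + μ

def firstIntegral (ν δ μ : ℝ) (y : ℝ → ℝ) (x : ℝ) : ℝ :=
  deriv y x * deriv (deriv (deriv y)) x / y x ^ 2 - (1/2) * (deriv (deriv y) x) ^ 2 / y x ^ 2
    - 2 * (deriv y x) ^ 2 * deriv (deriv y) x / y x ^ 3 + (9/8) * (deriv y x) ^ 4 / y x ^ 4
    - (5/2) * δ * (deriv y x) ^ 2 / y x ^ 4 + (1/2) * δ ^ 2 / y x ^ 4 - μ / y x + ν * y x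

theorem hasDerivAt_firstIntegral (ν δ μ : ℝ) {y : ℝ → ℝ} {x : ℝ} (hx : y x ≠ 0)
    (hd0 : DifferentiableAt ℝ y x) (hd1 : DifferentiableAt ℝ (deriv y) x)
    (hd2 : DifferentiableAt ℝ (deriv (deriv y)) x)
    (hd3 : DifferentiableAt ℝ (deriv (deriv (deriv y))) x) :
    HasDerivAt (firstIntegral ν δ μ y) (deriv y x / y x ^ 2 * equationLHS ν δ μ y x) x := by
  have h0 := hd0.hasDerivAt
  have h1 := hd1.hasDerivAt
  have h2 := hd2.hasDerivAt
  have h3 := hd3.hasDerivAt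
  have hx2 := pow_ne_zero 2 hx
  have hx3 := pow_ne_zero 3 hx
  have hx4 := pow_ne_zero 4 hx
  have H := ((h1.mul h3).div (h0.pow 2) hx2
    |>.sub (((h2.pow 2).const_mul (1/2 : ℝ)).div (h0.pow 2) hx2)
    |>.sub ((((h1.pow 2).const_mul (2 : ℝ)).mul h2).div (h0.pow 3) hx3)
    |>.add (((h1.pow 4).const_mul (9/8 : ℝ)).div (h0.pow 4) hx4)
    |>.sub (((h1.pow 2).const_mul ((5/2) * δ)).div (h0.pow 4) hx4)
    |>.add ((hasDerivAt_const x ((1/2) * δ ^ 2)).div (h0.pow 4) hx4)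
    |>.sub ((hasDerivAt_const x μ).div h0 hx)
    |>.add (h0.const_mul ν))
  refine H.congr_deriv ?_
  simp only [equationLHS, Pi.pow_apply, Pi.mul_apply]
  field_simp
  ring

end HigherPainleve

end

open HigherPainleve in
theorem stmt16 (ν δ μ : ℝ) (y : ℝ → ℝ)
    (hne : ∀ x : ℝ, y x ≠ 0)
    (hd0 : Differentiable ℝ y) (hd1 : Differentiable ℝ (deriv y))
    (hd2 : Differentiable ℝ (deriv (deriv y)))
    (hd3 : Differentiable ℝ (deriv (deriv (deriv y))))
    (hy : ∀ x : ℝ, deriv (deriv (deriv (deriv y))) x - 4 * deriv y x * deriv (deriv (deriv y)) x / y x + (21/2) * (deriv y x) ^ 2 * deriv (deriv y) x / y x ^ 2 - 3 * (deriv (deriv y) x) ^ 2 / y x - 5 * δ * deriv (deriv y) x / y x ^ 2 - (9/2) * (deriv y x) ^ 4 / y x ^ 3 + 10 * δ * (deriv y x) ^ 2 / y x ^ 3 + ν * y x ^ 2 - 2 * δ ^ 2 / y x ^ 3 + μ = 0) :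
    ∀ x₁ x₂ : ℝ, (deriv y x₁ * deriv (deriv (deriv y)) x₁ / y x₁ ^ 2 - (1/2) * (deriv (deriv y) x₁) ^ 2 / y x₁ ^ 2 - 2 * (deriv y x₁) ^ 2 * deriv (deriv y) x₁ / y x₁ ^ 3 + (9/8) * (deriv y x₁) ^ 4 / y x₁ ^ 4 - (5/2) * δ * (deriv y x₁) ^ 2 / y x₁ ^ 4 + (1/2) * δ ^ 2 / y x₁ ^ 4 - μ / y x₁ + ν * y x₁) = (deriv y x₂ * deriv (deriv (deriv y)) x₂ / y x₂ ^ 2 - (1/2) * (deriv (deriv y) x₂) ^ 2 / y x₂ ^ 2 - 2 * (deriv y x₂) ^ 2 * deriv (deriv y) x₂ / y x₂ ^ 3 + (9/8) * (deriv y x₂) ^ 4 / y x₂ ^ 4 - (5/2) * δ * (deriv y x₂) ^ 2 / y x₂ ^ 4 + (1/2) * δ ^ 2 / y x₂ ^ 4 - μ / y x₂ + ν * y x₂) := by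
  have hI : ∀ x, HasDerivAt (firstIntegral ν δ μ y) 0 x := fun x => by
    simpa [equationLHS, hy x] using
      hasDerivAt_firstIntegral ν δ μ (hne x) (hd0 x) (hd1 x) (hd2 x) (hd3 x)
  exact is_const_of_deriv_eq_zero (fun x => (hI x).differentiableAt) (fun x => (hI x).deriv)
end

section
/- Let β, μ ∈ ℝ and let y : ℝ → ℝ be four times differentiable with y(x) ≠ 0 for all x, satisfying y''''(x) − 2·y'''(x)·y'(x)/y(x) − (3/2)·y''(x)²/y(x) + 2·y''(x)·y'(x)²/y(x)² − 5·y(x)²·y''(x) − (5/2)·y(x)·y'(x)² + (5/2)·y(x)⁵ − β·y(x)³ + μ·y(x) = 0 for all x. Then the function x ↦ y'(x)·y'''(x)/y(x) − (1/2)·y''(x)²/y(x) − y'(x)²·y''(x)/y(x)² − (5/2)·y(x)·y'(x)² + (1/2)·y(x)⁵ − (1/3)·β·y(x)³ + μ·y(x) is constant on ℝ. -/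
/-!
Along any solution, the derivative of the first integral is `y'/y` times the left-hand side of
the equation, an identity of rational functions in the jet `(y, y', y'', y''', y'''')`; hence it
vanishes and the first integral is constant.
-/

noncomputable section

namespace FourthOrderPainleve

-- Both expressions are written as functions of the jet `(a, b, c, d, e) = (y, y', y'', y''', y'''')`.
def equationLHS (β μ a b c d e : ℝ) : ℝ :=
  e - 2 * d * b / a - (3/2) * c ^ 2 / a + 2 * c * b ^ 2 / a ^ 2 - 5 * a ^ 2 * c
    - (5/2) * a * b ^ 2 + (5/2) * a ^ 5 - β * a ^ 3 + μ * a

def firstIntegral (β μ a b c d : ℝ) : ℝ :=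
  b * d / a - (1/2) * c ^ 2 / a - b ^ 2 * c / a ^ 2 - (5/2) * a * b ^ 2 + (1/2) * a ^ 5
    - (1/3) * β * a ^ 3 + μ * a

theorem hasDerivAt_firstIntegral (β μ : ℝ) {y₀ y₁ y₂ y₃ : ℝ → ℝ} {y₄ x : ℝ}
    (h₀ : HasDerivAt y₀ (y₁ x) x) (h₁ : HasDerivAt y₁ (y₂ x) x)
    (h₂ : HasDerivAt y₂ (y₃ x) x) (h₃ : HasDerivAt y₃ y₄ x) (hx : y₀ x ≠ 0) :
    HasDerivAt (fun t ↦ firstIntegral β μ (y₀ t) (y₁ t) (y₂ t) (y₃ t))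
      (y₁ x / y₀ x * equationLHS β μ (y₀ x) (y₁ x) (y₂ x) (y₃ x) y₄) x := by
  have H := ((((((h₁.mul h₃).div h₀ hx).sub (((h₂.pow 2).const_mul (1/2 : ℝ)).div h₀ hx)).sub
    (((h₁.pow 2).mul h₂).div (h₀.pow 2) (pow_ne_zero 2 hx))).sub
    ((h₀.mul (h₁.pow 2)).const_mul (5/2 : ℝ))).add ((h₀.pow 5).const_mul (1/2 : ℝ))).sub
    ((h₀.pow 3).const_mul ((1/3 : ℝ) * β)) |>.add (h₀.const_mul μ)
  refine (H.congr_deriv ?_).congr_of_eventuallyEq (.of_forall fun t ↦ ?_)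
  · simp only [equationLHS, Pi.mul_apply, Pi.pow_apply]
    field_simp
    ring
  · simp only [firstIntegral, Pi.add_apply, Pi.sub_apply, Pi.mul_apply, Pi.div_apply,
      Pi.pow_apply]
    ring

end FourthOrderPainleve

end

open FourthOrderPainleve in
theorem stmt18 (β μ : ℝ) (y : ℝ → ℝ)
    (hne : ∀ x : ℝ, y x ≠ 0)
    (hd0 : Differentiable ℝ y) (hd1 : Differentiable ℝ (deriv y))
    (hd2 : Differentiable ℝ (deriv (deriv y)))
    (hd3 : Differentiable ℝ (deriv (deriv (deriv y))))
    (hy : ∀ x : ℝ, deriv (deriv (deriv (deriv y))) x - 2 * deriv (deriv (deriv y)) x * deriv y x / y x - (3/2) * (deriv (deriv y) x) ^ 2 / y x + 2 * deriv (deriv y) x * (deriv y x) ^ 2 / y x ^ 2 - 5 * y x ^ 2 * deriv (deriv y) x - (5/2) * y x * (deriv y x) ^ 2 + (5/2) * y x ^ 5 - β * y x ^ 3 + μ * y x = 0) :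
    ∀ x₁ x₂ : ℝ, (deriv y x₁ * deriv (deriv (deriv y)) x₁ / y x₁ - (1/2) * (deriv (deriv y) x₁) ^ 2 / y x₁ - (deriv y x₁) ^ 2 * deriv (deriv y) x₁ / y x₁ ^ 2 - (5/2) * y x₁ * (deriv y x₁) ^ 2 + (1/2) * y x₁ ^ 5 - (1/3) * β * y x₁ ^ 3 + μ * y x₁) = (deriv y x₂ * deriv (deriv (deriv y)) x₂ / y x₂ - (1/2) * (deriv (deriv y) x₂) ^ 2 / y x₂ - (deriv y x₂) ^ 2 * deriv (deriv y) x₂ / y x₂ ^ 2 - (5/2) * y x₂ * (deriv y x₂) ^ 2 + (1/2) * y x₂ ^ 5 - (1/3) * β * y x₂ ^ 3 + μ * y x₂) := by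
  have hI : ∀ x, HasDerivAt (fun t ↦ firstIntegral β μ (y t) (deriv y t) (deriv (deriv y) t)
      (deriv (deriv (deriv y)) t)) 0 x := fun x ↦ by
    have hE : equationLHS β μ (y x) (deriv y x) (deriv (deriv y) x) (deriv (deriv (deriv y)) x)
        (deriv (deriv (deriv (deriv y))) x) = 0 := hy x
    simpa only [hE, mul_zero] using hasDerivAt_firstIntegral β μ (hd0 x).hasDerivAt
      (hd1 x).hasDerivAt (hd2 x).hasDerivAt (hd3 x).hasDerivAt (hne x)
  exact is_const_of_deriv_eq_zero (fun x ↦ (hI x).differentiableAt) (fun x ↦ (hI x).deriv)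
end
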